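/- arXiv:0905.2478 — 3 statements merged into one kernel-verified Lean document; each statement's English description precedes it below -/
import Mathlib

section
/- Let T be a finite tree (a connected acyclic simple graph) with at least 3 vertices such that every vertex of degree two in T is adjacent to a leaf of T. Then T contains at least one vertex of Type I, Type II, or Type III. -/
/-!
Root `T` at a leaf `r` and pick a vertex `u` farthest from `r`; every vertex at that maximal
depth is a leaf, and the depth is at least two. Let `v₁` be the parent of `u` and `v₂` that of
`v₁`. Either `v₁` has two leaf children (Type III), or it has degree two. In the latter case
inspect the other children `c` of `v₂`, all of whose children are leaves: `c` is a leaf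
(Type I at `v₂`), a degree-two vertex (Type II at `v₂`) or has two leaf children (Type III).
If `v₁` is the only child of `v₂`, then either `v₂ = r` is a leaf (Type III at `v₁`) or `v₂`
has degree two, so it is adjacent to a leaf by hypothesis (Type I at `v₂`).
-/

/-- A leaf of a graph is a vertex of degree one. -/
def SimpleGraph.IsLeaf {V : Type*} [Fintype V] (T : SimpleGraph V) [DecidableRel T.Adj]
    (v : V) : Prop :=
  T.degree v = 1

/-- A vertex `w` is of Type I if `w` is adjacent to a leaf and also adjacent to a
degree-two vertex which is adjacent to a leaf. -/
def SimpleGraph.IsTypeI {V : Type*} [Fintype V] (T : SimpleGraph V) [DecidableRel T.Adj]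
    (w : V) : Prop :=
  (∃ l, T.Adj w l ∧ T.IsLeaf l) ∧
    (∃ u, T.Adj w u ∧ T.degree u = 2 ∧ ∃ l, T.Adj u l ∧ T.IsLeaf l)

/-- A vertex `w` is of Type II if `w` is adjacent to two distinct degree-two vertices
each of which is adjacent to a leaf. -/
def SimpleGraph.IsTypeII {V : Type*} [Fintype V] (T : SimpleGraph V) [DecidableRel T.Adj]
    (w : V) : Prop :=
  ∃ u₁ u₂, u₁ ≠ u₂ ∧
    T.Adj w u₁ ∧ T.degree u₁ = 2 ∧ (∃ l, T.Adj u₁ l ∧ T.IsLeaf l) ∧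
    T.Adj w u₂ ∧ T.degree u₂ = 2 ∧ (∃ l, T.Adj u₂ l ∧ T.IsLeaf l)

/-- A vertex `w` is of Type III if `w` is adjacent to two distinct leaves. -/
def SimpleGraph.IsTypeIII {V : Type*} [Fintype V] (T : SimpleGraph V) [DecidableRel T.Adj]
    (w : V) : Prop :=
  ∃ l₁ l₂, l₁ ≠ l₂ ∧ T.Adj w l₁ ∧ T.IsLeaf l₁ ∧ T.Adj w l₂ ∧ T.IsLeaf l₂

open Finset

namespace SimpleGraph

variable {V : Type*} {T : SimpleGraph V}

lemma Connected.exists_adj_dist_add_one_eq (hT : T.Connected) {r w : V} (hw : w ≠ r) :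
    ∃ p, T.Adj w p ∧ T.dist r p + 1 = T.dist r w := by
  obtain ⟨q, hq⟩ := hT.exists_walk_length_eq_dist w r
  cases q with
  | nil => exact absurd rfl hw
  | @cons _ p _ hp q =>
    refine ⟨p, hp, le_antisymm ?_ ?_⟩
    · rw [dist_comm, dist_comm (u := r), ← hq, Walk.length_cons]
      exact Nat.add_le_add_right (dist_le q) 1
    · rw [← dist_eq_one_iff_adj.mpr hp.symm]
      exact (hT p w).dist_triangle_right r

lemma IsTree.eq_of_adj_of_dist_add_one_eq (hT : T.IsTree) {r w x y : V}
    (hx : T.Adj w x) (hy : T.Adj w y)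
    (hdx : T.dist r x + 1 = T.dist r w) (hdy : T.dist r y + 1 = T.dist r w) : x = y := by
  obtain ⟨q, hq, -⟩ := hT.connected.exists_path_of_dist r w
  -- Extending a geodesic to `z` by the edge `zw` gives the unique path from `r` to `w`.
  suffices key : ∀ z, T.Adj w z → T.dist r z + 1 = T.dist r w → z = q.penultimate from
    (key x hx hdx).trans (key y hy hdy).symm
  intro z hz hdz
  obtain ⟨qz, -, hqz⟩ := hT.connected.exists_path_of_dist r z
  have hlen : (qz.concat hz.symm).length = T.dist r w := by
    rw [Walk.length_concat, hqz, hdz]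
  have hpath : qz.concat hz.symm = q :=
    congrArg Subtype.val <| (hT.isAcyclic.subsingleton_path r w).elim
      ⟨_, Walk.isPath_of_length_eq_dist _ hlen⟩ ⟨q, hq⟩
  rw [← hpath, Walk.penultimate_concat]

variable [Fintype V] [DecidableRel T.Adj]

lemma Connected.exists_two_le_dist_of_degree_eq_one (hT : T.Connected)
    (hcard : 3 ≤ Fintype.card V) {r : V} (hr : T.degree r = 1) : ∃ x, 2 ≤ T.dist r x := by
  classical
  obtain ⟨s, -, hs⟩ := degree_eq_one_iff_existsUnique_adj.mp hr
  obtain ⟨x, -, hx⟩ := exists_mem_notMem_of_card_lt_card (s := {r, s}) (t := univ)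
    (card_le_two.trans_lt (by rwa [card_univ]))
  simp only [mem_insert, mem_singleton, not_or] at hx
  exact ⟨x, hT.one_lt_dist_of_ne_of_not_adj (Ne.symm hx.1) fun h => hx.2 (hs x h)⟩

variable (T) in
noncomputable def childFinset (r w : V) : Finset V :=
  {x ∈ T.neighborFinset w | T.dist r x = T.dist r w + 1}

lemma mem_childFinset {r w x : V} :
    x ∈ T.childFinset r w ↔ T.Adj w x ∧ T.dist r x = T.dist r w + 1 := by
  simp [childFinset]

lemma IsTree.degree_eq_card_childFinset_add_one (hT : T.IsTree) {r w : V} (hw : w ≠ r) :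
    T.degree w = #(T.childFinset r w) + 1 := by
  classical
  obtain ⟨p, hp, hdp⟩ := hT.connected.exists_adj_dist_add_one_eq hw
  have hnbr : T.neighborFinset w = insert p (T.childFinset r w) := by
    ext y
    simp only [mem_neighborFinset, mem_insert, mem_childFinset]
    constructor
    · intro hy
      rcases hT.dist_eq_dist_add_one_of_adj r hy with h | h
      · exact .inl (hT.eq_of_adj_of_dist_add_one_eq hy hp h.symm hdp)
      · exact .inr ⟨hy, h⟩
    · rintro (rfl | ⟨hy, -⟩) <;> assumption
  rw [← card_neighborFinset_eq_degree, hnbr, card_insert_of_notMem]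
  rw [mem_childFinset]
  omega

lemma IsTree.isLeaf_of_forall_dist_le (hT : T.IsTree) {r w : V} (hw : w ≠ r)
    (hmax : ∀ x, T.dist r x ≤ T.dist r w) : T.IsLeaf w := by
  rw [IsLeaf, hT.degree_eq_card_childFinset_add_one hw, Nat.add_eq_right, card_eq_zero,
    eq_empty_iff_forall_notMem]
  intro x hx
  have := hmax x
  rw [mem_childFinset] at hx
  omega

lemma IsTree.not_isLeaf_of_mem_childFinset (hT : T.IsTree) {r w x : V} (hw : w ≠ r)
    (hx : x ∈ T.childFinset r w) : ¬T.IsLeaf w := by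
  rw [IsLeaf, hT.degree_eq_card_childFinset_add_one hw, Nat.add_eq_right]
  exact (card_pos.mpr ⟨x, hx⟩).ne'

lemma IsTree.isLeaf_or_isTypeIII_or_degree_eq_two (hT : T.IsTree) {r w : V} (hw : w ≠ r)
    (hleaf : ∀ x ∈ T.childFinset r w, T.IsLeaf x) :
    T.IsLeaf w ∨ T.IsTypeIII w ∨
      (T.degree w = 2 ∧ ∃ l ∈ T.childFinset r w, T.IsLeaf l) := by
  have hdeg := hT.degree_eq_card_childFinset_add_one hw
  rcases Nat.lt_or_ge 1 #(T.childFinset r w) with h | h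
  · obtain ⟨a, ha, b, hb, hab⟩ := one_lt_card.mp h
    exact .inr <| .inl
      ⟨a, b, hab, (mem_childFinset.mp ha).1, hleaf a ha, (mem_childFinset.mp hb).1, hleaf b hb⟩
  · interval_cases hcard : #(T.childFinset r w)
    · exact .inl hdeg
    · obtain ⟨l, hl⟩ := card_eq_one.mp hcard
      exact .inr <| .inr ⟨hdeg, l, by simp [hl], hleaf l (by simp [hl])⟩

lemma IsTree.exists_typeI_II_or_III_of_mem_childFinset (hT : T.IsTree) {r : V}
    (hr : T.IsLeaf r) (hdeg2 : ∀ v, T.degree v = 2 → ∃ l, T.Adj v l ∧ T.IsLeaf l)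
    {w v l : V} (hv : v ∈ T.childFinset r w) (hvdeg : T.degree v = 2)
    (hl : l ∈ T.childFinset r v) (hlleaf : T.IsLeaf l)
    (hleaves : ∀ c ∈ T.childFinset r w, ∀ x ∈ T.childFinset r c, T.IsLeaf x) :
    ∃ w, T.IsTypeI w ∨ T.IsTypeII w ∨ T.IsTypeIII w := by
  rw [mem_childFinset] at hv hl
  by_cases hsib : ∃ c ∈ T.childFinset r w, c ≠ v
  · obtain ⟨c, hc, hcv⟩ := hsib
    have hcr : c ≠ r := by
      rintro rfl
      rw [mem_childFinset, dist_self] at hc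
      omega
    rcases hT.isLeaf_or_isTypeIII_or_degree_eq_two hcr (hleaves c hc) with
      hcleaf | hc3 | ⟨hcdeg, l', hl', hl'leaf⟩
    · exact ⟨w, .inl ⟨⟨c, (mem_childFinset.mp hc).1, hcleaf⟩,
        v, hv.1, hvdeg, l, hl.1, hlleaf⟩⟩
    · exact ⟨c, .inr <| .inr hc3⟩
    · exact ⟨w, .inr <| .inl ⟨v, c, hcv.symm, hv.1, hvdeg, ⟨l, hl.1, hlleaf⟩,
        (mem_childFinset.mp hc).1, hcdeg, l', (mem_childFinset.mp hl').1, hl'leaf⟩⟩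
  push Not at hsib
  by_cases hwr : w = r
  · subst hwr
    have hlw : l ≠ w := by
      rintro rfl
      omega
    exact ⟨v, .inr <| .inr ⟨l, w, hlw, hl.1, hlleaf, hv.1.symm, hr⟩⟩
  · have hcard : #(T.childFinset r w) = 1 :=
      card_eq_one.mpr ⟨v, eq_singleton_iff_unique_mem.mpr ⟨mem_childFinset.mpr hv, hsib⟩⟩
    have hl' := hdeg2 w (by rw [hT.degree_eq_card_childFinset_add_one hwr, hcard])
    exact ⟨w, .inl ⟨hl', v, hv.1, hvdeg, l, hl.1, hlleaf⟩⟩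

end SimpleGraph

open SimpleGraph

/-- **Lemma 2 of the paper.** Every finite tree with at least 3 vertices in which every
degree-two vertex is adjacent to a leaf contains a vertex of Type I, Type II, or Type III. -/
theorem tree_has_typeI_II_or_III {V : Type*} [Fintype V] (T : SimpleGraph V)
    [DecidableRel T.Adj] (hT : T.IsTree) (hcard : 3 ≤ Fintype.card V)
    (hdeg2 : ∀ v, T.degree v = 2 → ∃ l, T.Adj v l ∧ T.IsLeaf l) :
    ∃ w, T.IsTypeI w ∨ T.IsTypeII w ∨ T.IsTypeIII w := by
  have : Nontrivial V := Fintype.one_lt_card_iff_nontrivial.mp (by omega)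
  obtain ⟨r, hr⟩ := hT.exists_vert_degree_one_of_nontrivial
  obtain ⟨u, hu⟩ := Finite.exists_max (T.dist r)
  have hd : 2 ≤ T.dist r u := by
    obtain ⟨x, hx⟩ := hT.connected.exists_two_le_dist_of_degree_eq_one hcard hr
    exact hx.trans (hu x)
  have hleaf : ∀ x, T.dist r u ≤ T.dist r x → T.IsLeaf x := fun x hx =>
    hT.isLeaf_of_forall_dist_le (by rintro rfl; rw [dist_self] at hx; omega)
      fun y => (hu y).trans hx
  have hur : u ≠ r := by rintro rfl; rw [dist_self] at hd; omega
  obtain ⟨v₁, hv₁u, hdv₁⟩ := hT.connected.exists_adj_dist_add_one_eq hur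
  have hv₁r : v₁ ≠ r := by rintro rfl; rw [dist_self] at hdv₁; omega
  obtain ⟨v₂, hv₂v₁, hdv₂⟩ := hT.connected.exists_adj_dist_add_one_eq hv₁r
  rcases hT.isLeaf_or_isTypeIII_or_degree_eq_two hv₁r
      (fun x hx => hleaf x (by rw [mem_childFinset] at hx; omega)) with
    hv₁leaf | hv₁ | ⟨hv₁deg, l, hl, hlleaf⟩
  · exact absurd hv₁leaf <|
      hT.not_isLeaf_of_mem_childFinset hv₁r (mem_childFinset.mpr ⟨hv₁u.symm, by omega⟩)
  · exact ⟨v₁, .inr <| .inr hv₁⟩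
  · refine hT.exists_typeI_II_or_III_of_mem_childFinset hr hdeg2
      (mem_childFinset.mpr ⟨hv₂v₁.symm, by omega⟩) hv₁deg hl hlleaf
      fun c hc x hx => hleaf x ?_
    rw [mem_childFinset] at hc hx
    omega
end

section
/- Let T be a finite tree with at least 3 vertices such that every vertex of degree two in T is adjacent to a leaf, and suppose T has no vertex of Type I, Type II, or Type III. Then for every leaf l of T there exists a vertex w with degree at least 3 such that either w is adjacent to l, or w is adjacent to a degree-two vertex which is adjacent to l. -/
/-! The neighbour `w` of a leaf `l` has degree at least 2, since otherwise `{l, w}` would be a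
connected component of the (connected, at least 3-vertex) tree. If `w` has degree exactly 2, its other neighbour `x` is not a leaf
(else `w` would be of Type III) and not of degree 2 (else `x` would be of Type I, by the hypothesis
that degree-two vertices carry a leaf), so `x` is the root of `l`. -/

namespace SimpleGraph

variable {V : Type*} {G : SimpleGraph V}

lemma Reachable.mem_of_forall_adj_mem {s : Set V} (hs : ∀ a ∈ s, ∀ b, G.Adj a b → b ∈ s)
    {a b : V} (h : G.Reachable a b) (ha : a ∈ s) : b ∈ s := by
  obtain ⟨p⟩ := h
  induction p with
  | nil => exact ha
  | cons hadj _ ih => exact ih (hs _ ha _ hadj)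

lemma exists_adj_ne_of_one_lt_degree {v : V} [Fintype (G.neighborSet v)]
    (h : 1 < G.degree v) (a : V) : ∃ x, x ≠ a ∧ G.Adj v x := by
  obtain ⟨x, hx, hxa⟩ := Finset.exists_mem_ne h a
  exact ⟨x, hxa, (G.mem_neighborFinset v x).mp hx⟩

lemma Preconnected.eq_or_eq_of_adj_of_degree_eq_one (hG : G.Preconnected) {u v : V}
    [Fintype (G.neighborSet u)] [Fintype (G.neighborSet v)] (huv : G.Adj u v)
    (hu : G.degree u = 1) (hv : G.degree v = 1) (w : V) : w = u ∨ w = v := by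
  obtain ⟨_, -, hu⟩ := degree_eq_one_iff_existsUnique_adj.mp hu
  obtain ⟨_, -, hv⟩ := degree_eq_one_iff_existsUnique_adj.mp hv
  refine (hG u w).mem_of_forall_adj_mem (s := {u, v}) ?_ (Set.mem_insert u _)
  rintro a (rfl | rfl) b hab
  · exact Or.inr ((hu b hab).trans (hu v huv).symm)
  · exact Or.inl ((hv b hab).trans (hv u huv.symm).symm)

lemma Preconnected.one_lt_degree_of_adj_of_degree_eq_one [Fintype V] [DecidableRel G.Adj]
    (hG : G.Preconnected) (hV : 2 < Fintype.card V) {u v : V} (huv : G.Adj u v)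
    (hu : G.degree u = 1) : 1 < G.degree v := by
  have hv0 : G.degree v ≠ 0 := (G.degree_pos_iff_exists_adj v).mpr ⟨u, huv.symm⟩ |>.ne'
  have hv1 : G.degree v ≠ 1 := fun hv ↦ by
    classical
    have hsub : (Finset.univ : Finset V) ⊆ {u, v} := fun w _ ↦ by
      simpa using hG.eq_or_eq_of_adj_of_degree_eq_one huv hu hv w
    have := (Finset.card_le_card hsub).trans Finset.card_le_two
    rw [Finset.card_univ] at this
    omega
  omega

end SimpleGraph

/-- If a finite tree with at least 3 vertices has every degree-two vertex adjacent to a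
leaf and contains no vertex of Type I, II or III, then every leaf `l` admits a vertex `w` of
degree at least 3 such that `w` is adjacent to `l`, or `w` is adjacent to a degree-two
vertex which is adjacent to `l`. -/
theorem every_leaf_has_root {V : Type*} [Fintype V] (T : SimpleGraph V)
    [DecidableRel T.Adj] (hT : T.IsTree) (hcard : 3 ≤ Fintype.card V)
    (hdeg2 : ∀ v, T.degree v = 2 → ∃ l, T.Adj v l ∧ T.IsLeaf l)
    (hno : ∀ w, ¬ T.IsTypeI w ∧ ¬ T.IsTypeII w ∧ ¬ T.IsTypeIII w) :
    ∀ l, T.IsLeaf l → ∃ w, 3 ≤ T.degree w ∧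
      (T.Adj w l ∨ ∃ u, T.Adj w u ∧ T.degree u = 2 ∧ T.Adj u l) := by
  intro l hl
  obtain ⟨w, hlw, -⟩ := SimpleGraph.degree_eq_one_iff_existsUnique_adj.mp hl
  have hconn := hT.connected.preconnected
  have hw : 2 ≤ T.degree w := hconn.one_lt_degree_of_adj_of_degree_eq_one hcard hlw hl
  obtain hw | hw := hw.eq_or_lt
  · obtain ⟨x, hxl, hwx⟩ := T.exists_adj_ne_of_one_lt_degree (v := w) (by omega) l
    have hx0 : T.degree x ≠ 0 := (T.degree_pos_iff_exists_adj x).mpr ⟨w, hwx.symm⟩ |>.ne'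
    have hx1 : T.degree x ≠ 1 := fun hx1 ↦
      (hno w).2.2 ⟨l, x, hxl.symm, hlw.symm, hl, hwx, hx1⟩
    have hx2 : T.degree x ≠ 2 := fun hx2 ↦
      (hno x).1 ⟨hdeg2 x hx2, w, hwx.symm, hw.symm, l, hlw.symm, hl⟩
    exact ⟨x, by omega, Or.inr ⟨w, hwx.symm, hw.symm, hlw.symm⟩⟩
  · exact ⟨w, hw, Or.inl hlw.symm⟩
end

section
/- Let T be a finite tree with at least 3 vertices such that every vertex of degree two in T is adjacent to a leaf, and suppose T has no vertex of Type I, Type II, or Type III. Then the number of vertices of T of degree at least 3 is greater than or equal to the number of leaves of T. -/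
/-! Every leaf `l` is sent to a vertex of degree at least three: its neighbour `u`, or, when `u`
has degree two, the other neighbour of `u`. That other neighbour cannot be a leaf (Type III at `u`)
nor have degree two (Type I at it, by the hypothesis on degree-two vertices), and `u` itself cannot
be a leaf since the tree has at least three vertices. Two leaves sent to the same vertex `w` would
make `w` of Type I, II or III. -/

namespace SimpleGraph

variable {V : Type*} [Fintype V] {G : SimpleGraph V} [DecidableRel G.Adj]

theorem IsLeaf.eq_of_adj {l x y : V} (hl : G.IsLeaf l) (hx : G.Adj l x) (hy : G.Adj l y) :
    x = y := by
  obtain ⟨w, -, hw⟩ := degree_eq_one_iff_existsUnique_adj.mp hl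
  rw [hw x hx, hw y hy]

theorem Adj.degree_pos {v w : V} (h : G.Adj v w) : 0 < G.degree v :=
  (G.degree_pos_iff_exists_adj v).mpr ⟨w, h⟩

theorem two_lt_degree_of_adj {v a b c : V} (ha : G.Adj v a) (hb : G.Adj v b) (hc : G.Adj v c)
    (hab : a ≠ b) (hac : a ≠ c) (hbc : b ≠ c) : 2 < G.degree v := by
  rw [← card_neighborFinset_eq_degree, Finset.two_lt_card]
  exact ⟨a, by simpa, b, by simpa, c, by simpa, hab, hac, hbc⟩

theorem Preconnected.card_le_two_of_adj_of_isLeaf (hG : G.Preconnected) {a b : V}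
    (hab : G.Adj a b) (ha : G.IsLeaf a) (hb : G.IsLeaf b) : Fintype.card V ≤ 2 := by
  classical
  have hmem : ∀ v, v = a ∨ v = b := fun v ↦ by
    induction (reachable_iff_reflTransGen a v).mp (hG a v) with
    | refl => exact Or.inl rfl
    | tail _ hxy ih =>
      rcases ih with rfl | rfl
      · exact Or.inr (ha.eq_of_adj hxy hab)
      · exact Or.inl (hb.eq_of_adj hxy hab.symm)
  calc Fintype.card V = (Finset.univ : Finset V).card := Finset.card_univ.symm
    _ ≤ ({a, b} : Finset V).card := Finset.card_le_card fun v _ ↦ by simpa using hmem v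
    _ ≤ 2 := Finset.card_le_two

def IsLeafAnchor (G : SimpleGraph V) [DecidableRel G.Adj] (l w : V) : Prop :=
  3 ≤ G.degree w ∧ (G.Adj l w ∨ ∃ u, G.Adj l u ∧ G.degree u = 2 ∧ G.Adj u w)

theorem exists_isLeafAnchor (hG : G.Preconnected) (hcard : 3 ≤ Fintype.card V)
    (hdeg2 : ∀ v, G.degree v = 2 → ∃ l, G.Adj v l ∧ G.IsLeaf l)
    (hI : ∀ w, ¬ G.IsTypeI w) (hIII : ∀ w, ¬ G.IsTypeIII w) {l : V} (hl : G.IsLeaf l) :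
    ∃ w, G.IsLeafAnchor l w := by
  obtain ⟨u, hu, -⟩ := degree_eq_one_iff_existsUnique_adj.mp hl
  have hu1 : G.degree u ≠ 1 := fun h ↦ by
    have := hG.card_le_two_of_adj_of_isLeaf hu hl h
    omega
  have hu0 := hu.symm.degree_pos
  by_cases hu2 : G.degree u = 2
  · obtain ⟨w, hw, hwl⟩ : ∃ w ∈ G.neighborFinset u, w ≠ l :=
      Finset.exists_mem_ne (by rw [card_neighborFinset_eq_degree]; omega) l
    rw [mem_neighborFinset] at hw
    have hw1 : G.degree w ≠ 1 := fun h ↦ hIII u ⟨w, l, hwl, hw, h, hu.symm, hl⟩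
    have hw2 : G.degree w ≠ 2 := fun h ↦ hI w ⟨hdeg2 w h, u, hw.symm, hu2, l, hu.symm, hl⟩
    have hw0 := hw.symm.degree_pos
    exact ⟨w, by omega, Or.inr ⟨u, hu, hu2, hw⟩⟩
  · exact ⟨u, by omega, Or.inl hu⟩

theorem IsLeafAnchor.eq {l₁ l₂ w : V} (hI : ¬ G.IsTypeI w) (hII : ¬ G.IsTypeII w)
    (hIII : ¬ G.IsTypeIII w) (hl₁ : G.IsLeaf l₁) (hl₂ : G.IsLeaf l₂)
    (h₁ : G.IsLeafAnchor l₁ w) (h₂ : G.IsLeafAnchor l₂ w) : l₁ = l₂ := by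
  by_contra hne
  obtain ⟨hw, h₁ | ⟨u₁, hlu₁, hu₁, huw₁⟩⟩ := h₁ <;>
    obtain ⟨-, h₂ | ⟨u₂, hlu₂, hu₂, huw₂⟩⟩ := h₂
  · exact hIII ⟨l₁, l₂, hne, h₁.symm, hl₁, h₂.symm, hl₂⟩
  · exact hI ⟨⟨l₁, h₁.symm, hl₁⟩, u₂, huw₂.symm, hu₂, l₂, hlu₂.symm, hl₂⟩
  · exact hI ⟨⟨l₂, h₂.symm, hl₂⟩, u₁, huw₁.symm, hu₁, l₁, hlu₁.symm, hl₁⟩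
  · have hu₁₂ : u₁ ≠ u₂ := by
      rintro rfl
      have hwl₁ : l₁ ≠ w := by rintro rfl; unfold IsLeaf at hl₁; omega
      have hwl₂ : l₂ ≠ w := by rintro rfl; unfold IsLeaf at hl₂; omega
      have := two_lt_degree_of_adj hlu₁.symm hlu₂.symm huw₁ hne hwl₁ hwl₂
      omega
    exact hII ⟨u₁, u₂, hu₁₂, huw₁.symm, hu₁, ⟨l₁, hlu₁.symm, hl₁⟩,
      huw₂.symm, hu₂, ⟨l₂, hlu₂.symm, hl₂⟩⟩

end SimpleGraph

/-- If a finite tree with at least 3 vertices has every degree-two vertex adjacent to a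
leaf and contains no vertex of Type I, II or III, then the number of vertices of degree
at least 3 is at least the number of leaves. -/
theorem card_highdeg_ge_card_leaves {V : Type*} [Fintype V] (T : SimpleGraph V)
    [DecidableRel T.Adj] (hT : T.IsTree) (hcard : 3 ≤ Fintype.card V)
    (hdeg2 : ∀ v, T.degree v = 2 → ∃ l, T.Adj v l ∧ T.IsLeaf l)
    (hno : ∀ w, ¬ T.IsTypeI w ∧ ¬ T.IsTypeII w ∧ ¬ T.IsTypeIII w) :
    (Finset.univ.filter fun v => T.degree v = 1).card ≤
      (Finset.univ.filter fun v => 3 ≤ T.degree v).card := by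
  refine Finset.card_le_card_of_forall_subsingleton T.IsLeafAnchor (fun l hl ↦ ?_)
    fun w _ l₁ hl₁ l₂ hl₂ ↦ ?_
  · rw [Finset.mem_filter] at hl
    obtain ⟨w, hw⟩ := T.exists_isLeafAnchor hT.connected.preconnected hcard hdeg2
      (fun w ↦ (hno w).1) (fun w ↦ (hno w).2.2) hl.2
    exact ⟨w, Finset.mem_filter.mpr ⟨Finset.mem_univ w, hw.1⟩, hw⟩
  · obtain ⟨hI, hII, hIII⟩ := hno w
    exact hl₁.2.eq hI hII hIII (Finset.mem_filter.mp hl₁.1).2 (Finset.mem_filter.mp hl₂.1).2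
      hl₂.2
end
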